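/- Let f, g, h : H → ℝ be functions on a set H with g(w) ≥ ξ > 0 for all w. If sup_{w∈H} |f(w) − g(w)|/g(w) ≤ δ₁ < 1 and sup_{w∈H} |h(w) − g(w)|/g(w) ≤ δ₂ < 1, and ŵ minimizes f over H while w* minimizes h over H, then h(ŵ)/inf_{w∈H} h(w) ≤ (1+δ₁)(1+δ₂)/((1−δ₁)(1−δ₂)). -/
import Mathlib


/-- Deterministic core of the optimality argument: if `f` and `h` are both within
relative distance `δ₁`, `δ₂` of `g` on `H` (with `g ≥ ξ > 0`), `wh` minimizes `f`
over `H`, and `w*` minimizes `h` over `H`, then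
`h(wh)/inf_{w∈H} h(w) ≤ (1+δ₁)(1+δ₂)/((1−δ₁)(1−δ₂))`. -/
theorem stmt_9 {α : Type*} (H : Set α) (hne : H.Nonempty)
    (f g h : α → ℝ) (ξ δ₁ δ₂ : ℝ) (hξ : 0 < ξ)
    (hg : ∀ w ∈ H, ξ ≤ g w)
    (hδ₁ : δ₁ < 1) (hδ₂ : δ₂ < 1)
    (hfg : ∀ w ∈ H, |f w - g w| / g w ≤ δ₁)
    (hhg : ∀ w ∈ H, |h w - g w| / g w ≤ δ₂)
    (wh : α) (hwh : wh ∈ H) (hmin : ∀ w ∈ H, f wh ≤ f w)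
    (wstar : α) (hwstar : wstar ∈ H) (hminh : ∀ w ∈ H, h wstar ≤ h w) :
    h wh / sInf (h '' H) ≤ (1 + δ₁) * (1 + δ₂) / ((1 - δ₁) * (1 - δ₂)) := by
  have hgpos : ∀ w ∈ H, 0 < g w := fun w hw => lt_of_lt_of_le hξ (hg w hw)
  have hδ₁0 : 0 ≤ δ₁ :=
    le_trans (div_nonneg (abs_nonneg _) (hgpos wh hwh).le) (hfg wh hwh)
  have hδ₂0 : 0 ≤ δ₂ :=
    le_trans (div_nonneg (abs_nonneg _) (hgpos wh hwh).le) (hhg wh hwh)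
  have hfb : ∀ w ∈ H, (1 - δ₁) * g w ≤ f w ∧ f w ≤ (1 + δ₁) * g w := by
    intro w hw
    have habs : |f w - g w| ≤ δ₁ * g w := by
      have := (div_le_iff₀ (hgpos w hw)).mp (hfg w hw)
      linarith
    rw [abs_le] at habs
    constructor <;> nlinarith [habs.1, habs.2]
  have hhb : ∀ w ∈ H, (1 - δ₂) * g w ≤ h w ∧ h w ≤ (1 + δ₂) * g w := by
    intro w hw
    have habs : |h w - g w| ≤ δ₂ * g w := by
      have := (div_le_iff₀ (hgpos w hw)).mp (hhg w hw)
      linarith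
    rw [abs_le] at habs
    constructor <;> nlinarith [habs.1, habs.2]
  have hsinf : sInf (h '' H) = h wstar := by
    apply le_antisymm
    · exact csInf_le ⟨h wstar, fun x ⟨w, hw, hx⟩ => hx ▸ hminh w hw⟩
        ⟨wstar, hwstar, rfl⟩
    · exact le_csInf ⟨h wstar, wstar, hwstar, rfl⟩
        (fun x ⟨w, hw, hx⟩ => hx ▸ hminh w hw)
  rw [hsinf]
  have hhs : 0 < h wstar :=
    lt_of_lt_of_le (by nlinarith [hg wstar hwstar] : 0 < (1 - δ₂) * g wstar)
      (hhb wstar hwstar).1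
  rw [div_le_div_iff₀ hhs (by nlinarith : (0:ℝ) < (1 - δ₁) * (1 - δ₂))]
  have h1 : h wh ≤ (1 + δ₂) * g wh := (hhb wh hwh).2
  have h2 : (1 - δ₁) * g wh ≤ f wh := (hfb wh hwh).1
  have h3 : f wh ≤ f wstar := hmin wstar hwstar
  have h4 : f wstar ≤ (1 + δ₁) * g wstar := (hfb wstar hwstar).2
  have h5 : (1 - δ₂) * g wstar ≤ h wstar := (hhb wstar hwstar).1
  have c1 : (0:ℝ) ≤ (1 - δ₁) * (1 - δ₂) := by nlinarith
  have c2 : (0:ℝ) ≤ (1 + δ₂) * (1 - δ₂) := by nlinarith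
  have c3 : (0:ℝ) ≤ (1 + δ₁) * (1 + δ₂) := by nlinarith
  nlinarith [mul_le_mul_of_nonneg_right h1 c1,
    mul_le_mul_of_nonneg_left h2 c2,
    mul_le_mul_of_nonneg_left h3 c2,
    mul_le_mul_of_nonneg_left h4 c2,
    mul_le_mul_of_nonneg_left h5 c3]
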